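/- arXiv:1907.09271 — 4 statements merged into one kernel-verified Lean document; each statement's English description precedes it below -/
import Mathlib

section
/- Let D be a DFA over a nonempty alphabet α whose state type σ is a finite type, and suppose D has a unique recurrent state d (i.e., d is recurrent and every recurrent state equals d). Then d is a dead state: D.step d a = d for every letter a ∈ α. -/
/-- A state `q` of a DFA is recurrent if there is a nonempty word `x`
with `evalFrom q x = q`. -/
def DFA.Recurrent {α σ : Type*} (D : DFA α σ) (q : σ) : Prop :=
  ∃ x : List α, x ≠ [] ∧ D.evalFrom q x = q

lemma evalFrom_replicate {α σ : Type*} (D : DFA α σ) (a : α) :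
    ∀ (n : ℕ) (q : σ), D.evalFrom q (List.replicate n a) = (fun s => D.step s a)^[n] q := by
  intro n
  induction n with
  | zero => intro q; rfl
  | succ n ih =>
    intro q
    rw [List.replicate_succ, Function.iterate_succ_apply]
    exact ih (D.step q a)

theorem dead_of_unique_recurrent {α σ : Type*} [Nonempty α] [Fintype σ]
    (D : DFA α σ) (d : σ) (hd : D.Recurrent d)
    (huniq : ∀ q : σ, D.Recurrent q → q = d) :
    ∀ a : α, D.step d a = d := by
  intro a
  set f : σ → σ := fun s => D.step s a with hf
  obtain ⟨i, j, hij, heq⟩ := Finite.exists_ne_map_eq_of_infinite (fun n : ℕ => f^[n] d)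
  wlog hlt : i < j generalizing i j
  · exact this j i hij.symm heq.symm (by omega)
  have hk : 0 < j - i := by omega
  have hadd : f^[j - i] (f^[i] d) = f^[i] d := by
    rw [← Function.iterate_add_apply]
    have : j - i + i = j := by omega
    rw [this]; exact heq.symm
  have hrec : D.Recurrent (f^[i] d) :=
    ⟨List.replicate (j - i) a, by simp [hk.ne'],
      by rw [evalFrom_replicate]; exact hadd⟩
  have hid : f^[i] d = d := huniq _ hrec
  have hkd : f^[j - i] d = d := by rw [hid] at hadd; exact hadd
  have hrec2 : D.Recurrent (f d) := by
    refine ⟨List.replicate (j - i) a, by simp [hk.ne'], ?_⟩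
    rw [evalFrom_replicate, ← Function.iterate_succ_apply, Function.iterate_succ_apply', hkd]
  exact huniq _ hrec2
end

section
/- Let D be an acyclic DFA over a nonempty alphabet α whose state type σ is a finite type with n elements, with unique recurrent (dead) state d. Then for every state q and every word x over α with length |x| ≥ n, D.evalFrom q x = d. -/
theorem acyclic_evalFrom_long_word {α σ : Type*} [Nonempty α] [Fintype σ]
    (D : DFA α σ) (d : σ) (hd : D.Recurrent d)
    (huniq : ∀ q : σ, D.Recurrent q → q = d) :
    ∀ (q : σ) (x : List α), Fintype.card σ ≤ x.length → D.evalFrom q x = d := by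
  -- From any state, some prefix of a long enough word reaches `d`.
  have hreach : ∀ s : σ, ∃ v : List α, D.evalFrom s v = d := by
    intro s
    obtain ⟨a0⟩ := ‹Nonempty α›
    set x : List α := List.replicate (Fintype.card σ) a0 with hx
    obtain ⟨q, a, b, c, _, _, hb, hsa, hqb, _⟩ :=
      D.evalFrom_split (s := s) (t := D.evalFrom s x) (by simp [hx]) rfl
    exact ⟨a, hsa.trans (huniq q ⟨b, hb, hqb⟩)⟩
  -- every single step from `d` stays at `d`
  have hstep : ∀ a : α, D.step d a = d := by
    intro a
    obtain ⟨v, hv⟩ := hreach (D.step d a)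
    refine (huniq (D.step d a) ⟨v ++ [a], by simp, ?_⟩)
    rw [D.evalFrom_of_append, hv, D.evalFrom_singleton]
  -- hence every word keeps `d` at `d`
  have hfix : ∀ z : List α, D.evalFrom d z = d := by
    intro z
    induction z with
    | nil => rfl
    | cons a t ih =>
      show D.evalFrom (D.step d a) t = d
      rwa [hstep a]
  intro q x hlen
  obtain ⟨p, a, b, c, hx, _, hb, hsa, hqb, hqc⟩ :=
    D.evalFrom_split (s := q) (t := D.evalFrom q x) hlen rfl
  have hpd : p = d := huniq p ⟨b, hb, hqb⟩
  calc D.evalFrom q x = D.evalFrom p c := hqc.symm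
    _ = d := by rw [hpd]; exact hfix c
end

section
/- Let D be an acyclic DFA over a nonempty alphabet α whose state type σ is a finite type with n elements, with unique recurrent (dead) state d. If the dead state d is not an accepting state, then every word accepted by D has length strictly less than n; in particular, the language accepted by D is a finite set of words (assuming the alphabet α is finite). -/
namespace DFA

variable {α σ : Type*} [Fintype σ] (D : DFA α σ)

theorem exists_recurrent_prefix (s : σ) {x : List α} (hlen : Fintype.card σ ≤ x.length) :
    ∃ y z, x = y ++ z ∧ D.Recurrent (D.evalFrom s y) := by
  obtain ⟨q, a, b, c, rfl, -, hb, hqa, hqb, -⟩ := D.evalFrom_split hlen rfl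
  exact ⟨a, b ++ c, List.append_assoc a b c, b, hb, hqa ▸ hqb⟩

variable {D} {d : σ} (huniq : ∀ q : σ, D.Recurrent q → q = d)
include huniq

theorem step_eq_of_unique_recurrent (a : α) : D.step d a = d := by
  obtain ⟨y, -, -, hy⟩ :=
    D.exists_recurrent_prefix (D.step d a) (x := List.replicate (Fintype.card σ) a) (by simp)
  exact huniq _ ⟨y ++ [a], by simp, by rw [evalFrom_append_singleton, huniq _ hy]⟩

theorem evalFrom_eq_of_unique_recurrent (x : List α) : D.evalFrom d x = d := by
  induction x with
  | nil => rfl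
  | cons a x ih => rwa [evalFrom_cons, step_eq_of_unique_recurrent huniq]

theorem length_lt_card_of_mem_accepts (hdead : d ∉ D.accept) {x : List α} (hx : x ∈ D.accepts) :
    x.length < Fintype.card σ := by
  by_contra! hlen
  obtain ⟨y, z, rfl, hy⟩ := D.exists_recurrent_prefix D.start hlen
  rw [mem_accepts, eval, evalFrom_of_append, huniq _ hy,
    evalFrom_eq_of_unique_recurrent huniq] at hx
  exact hdead hx

end DFA

theorem acyclic_accepts_short_and_finite_general {α σ : Type*} [Fintype α] [Fintype σ]
    (D : DFA α σ) (d : σ)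
    (huniq : ∀ q : σ, D.Recurrent q → q = d)
    (hdead : d ∉ D.accept) :
    (∀ x : List α, x ∈ D.accepts → x.length < Fintype.card σ) ∧
      Set.Finite {x : List α | x ∈ D.accepts} :=
  have hshort := fun _ => D.length_lt_card_of_mem_accepts huniq hdead
  ⟨hshort, (List.finite_length_lt α (Fintype.card σ)).subset hshort⟩

theorem acyclic_accepts_short_and_finite {α σ : Type*} [Nonempty α] [Fintype α] [Fintype σ]
    (D : DFA α σ) (d : σ) (hd : D.Recurrent d)
    (huniq : ∀ q : σ, D.Recurrent q → q = d)
    (hdead : d ∉ D.accept) :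
    (∀ x : List α, x ∈ D.accepts → x.length < Fintype.card σ) ∧
      Set.Finite {x : List α | x ∈ D.accepts} :=
  acyclic_accepts_short_and_finite_general D d huniq hdead
end

section
/- Fix an integer σ ≥ 2. Then there exists a constant C > 0 such that for all integers n ≥ 2, | log₂( n · 2^(2n) · S₂(σn, n) ) − (σ − 1) · n · log₂ n | ≤ C · n. In other words, the information-theoretic lower bound log₂(n · 2^(2n) · S₂(σn, n)) for representing an initially connected DFA with n states over a σ-letter alphabet equals (σ−1)·n·log₂ n + O(n). -/
/-!
The Stirling number is sandwiched as `n ^ ((σ - 1) n) ≤ S₂(σn, n) ≤ 2 ^ (σn) · n ^ ((σ - 1) n)`: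
both bounds follow from the recursion, the upper one in the sharper form
`S₂(N, k) ≤ C(N, k) · k ^ (N - k)`. Taking `log₂`, the factors `n`, `2 ^ (2n)` and `2 ^ (σn)`
contribute only `O(n)`, since `log₂ n ≤ n`.
-/

/-- The Stirling numbers of the second kind. -/
def stirlingSecond : ℕ → ℕ → ℕ
  | 0, 0 => 1
  | 0, _ + 1 => 0
  | _ + 1, 0 => 0
  | n + 1, m + 1 => (m + 1) * stirlingSecond n (m + 1) + stirlingSecond n m

open Real

theorem stirlingSecond_eq_nat_stirlingSecond : stirlingSecond = Nat.stirlingSecond := by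
  funext n k
  induction n generalizing k with
  | zero => cases k <;> rfl
  | succ n ih =>
    cases k with
    | zero => rfl
    | succ k => rw [stirlingSecond, Nat.stirlingSecond_succ_succ, ih, ih]

namespace Nat

theorem pow_le_stirlingSecond_add (k d : ℕ) : k ^ d ≤ stirlingSecond (k + d) k := by
  induction d with
  | zero => simp [stirlingSecond_self]
  | succ d ih =>
    rcases k.eq_zero_or_pos with rfl | hk
    · simp
    rw [← add_assoc, stirlingSecond_succ_left _ _ hk.ne', pow_succ']
    exact (Nat.mul_le_mul_left k ih).trans (le_add_right _ _)

theorem stirlingSecond_add_pos {k : ℕ} (hk : 0 < k) (d : ℕ) : 0 < stirlingSecond (k + d) k :=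
  (Nat.pow_pos hk).trans_le (pow_le_stirlingSecond_add k d)

theorem stirlingSecond_le_choose_mul_pow (n k : ℕ) :
    stirlingSecond n k ≤ n.choose k * k ^ (n - k) := by
  induction n generalizing k with
  | zero => cases k <;> simp
  | succ n ih =>
    cases k with
    | zero => simp
    | succ j =>
      -- both sides vanish when `n ≤ j`; otherwise `n - j = n - (j + 1) + 1`
      have hshift : (j + 1) * (n.choose (j + 1) * (j + 1) ^ (n - (j + 1))) =
          n.choose (j + 1) * (j + 1) ^ (n - j) := by
        rcases le_or_gt n j with h | h
        · simp [choose_eq_zero_of_lt (lt_succ_of_le h)]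
        · rw [show n - j = n - (j + 1) + 1 by omega, pow_succ]; ring
      calc stirlingSecond (n + 1) (j + 1)
          = (j + 1) * stirlingSecond n (j + 1) + stirlingSecond n j := stirlingSecond_succ_succ n j
        _ ≤ n.choose (j + 1) * (j + 1) ^ (n - j) + n.choose j * (j + 1) ^ (n - j) := by
          rw [← hshift]
          gcongr
          · exact ih (j + 1)
          · exact (ih j).trans (Nat.mul_le_mul_left _ (Nat.pow_le_pow_left (le_succ j) _))
        _ = (n + 1).choose (j + 1) * (j + 1) ^ (n + 1 - (j + 1)) := by
          rw [choose_succ_succ', Nat.add_sub_add_right]; ring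

theorem stirlingSecond_add_le (k d : ℕ) : stirlingSecond (k + d) k ≤ 2 ^ (k + d) * k ^ d :=
  calc stirlingSecond (k + d) k ≤ (k + d).choose k * k ^ (k + d - k) :=
        stirlingSecond_le_choose_mul_pow _ _
    _ ≤ 2 ^ (k + d) * k ^ d := by
        rw [Nat.add_sub_cancel_left]
        gcongr
        exact choose_le_two_pow _ _

end Nat

theorem logb_two_natCast_le_self (n : ℕ) : logb 2 n ≤ n := by
  rcases n.eq_zero_or_pos with rfl | hn
  · simp
  calc logb 2 n ≤ logb 2 ((2 : ℝ) ^ n) :=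
        logb_le_logb_of_le one_lt_two (by positivity) (by exact_mod_cast n.lt_two_pow_self.le)
    _ = n := by rw [logb_pow, logb_self_eq_one one_lt_two, mul_one]

theorem mul_logb_le_logb_stirlingSecond_add {k : ℕ} (hk : 0 < k) (d : ℕ) :
    d * logb 2 k ≤ logb 2 (Nat.stirlingSecond (k + d) k) := by
  rw [← logb_pow]
  exact logb_le_logb_of_le one_lt_two (by positivity)
    (by exact_mod_cast Nat.pow_le_stirlingSecond_add k d)

theorem logb_stirlingSecond_add_le {k : ℕ} (hk : 0 < k) (d : ℕ) :
    logb 2 (Nat.stirlingSecond (k + d) k) ≤ k + d + d * logb 2 k :=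
  calc logb 2 (Nat.stirlingSecond (k + d) k) ≤ logb 2 ((2 : ℝ) ^ (k + d) * (k : ℝ) ^ d) :=
        logb_le_logb_of_le one_lt_two (by exact_mod_cast Nat.stirlingSecond_add_pos hk d)
          (by exact_mod_cast Nat.stirlingSecond_add_le k d)
    _ = k + d + d * logb 2 k := by
        rw [logb_mul (by positivity) (by positivity), logb_pow, logb_pow,
          logb_self_eq_one one_lt_two]
        push_cast
        ring

theorem dfa_lower_bound_asymptotics (σ : ℕ) (hσ : 2 ≤ σ) :
    ∃ C : ℝ, 0 < C ∧ ∀ n : ℕ, 2 ≤ n →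
      |Real.logb 2 ((n : ℝ) * 2 ^ (2 * n) * (stirlingSecond (σ * n) n : ℝ)) -
        ((σ : ℝ) - 1) * (n : ℝ) * Real.logb 2 (n : ℝ)| ≤ C * (n : ℝ) := by
  refine ⟨σ + 3, by positivity, fun n hn => ?_⟩
  obtain ⟨d, rfl⟩ : ∃ d, σ = d + 1 := ⟨σ - 1, by omega⟩
  have hn : 0 < n := by omega
  rw [stirlingSecond_eq_nat_stirlingSecond, show (d + 1) * n = n + d * n by ring,
    logb_mul (by positivity) (by exact_mod_cast (Nat.stirlingSecond_add_pos hn _).ne'),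
    logb_mul (by positivity) (by positivity), logb_pow, logb_self_eq_one one_lt_two]
  have hlow := mul_logb_le_logb_stirlingSecond_add hn (d * n)
  have hup := logb_stirlingSecond_add_le hn (d * n)
  have hlogb_nonneg : 0 ≤ logb 2 (n : ℝ) := logb_nonneg one_lt_two (by exact_mod_cast hn)
  have hlogb_le := logb_two_natCast_le_self n
  push_cast at hlow hup ⊢
  rw [abs_le]
  constructor <;> linarith
end
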